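/- Let M ∈ ℂ^{n×n} be Hermitian positive semidefinite, E ∈ ℂ^{p×n} arbitrary, and S ∈ ℂ^{m×n} satisfy SᴴS = τ I_n for some real τ > 0. Let c > 0 and σ > 0 be real. Then the matrices c² S M Sᴴ + σ² I_m and M + (σ²/(τ c²)) I_n are invertible, and c² E Sᴴ (c² S M Sᴴ + σ² I_m)⁻¹ S Eᴴ = E (M + (σ²/(τ c²)) I_n)⁻¹ Eᴴ. -/

import Mathlib

/-!
Both matrices are positive definite, hence invertible. Writing `A = c² S M Sᴴ + σ² I` and
`B = M + σ²/(τ c²) I`, orthogonality of the pilot columns gives the push-through relation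
`Sᴴ A = τ c² B Sᴴ`. Inverting both sides turns it into `B⁻¹ Sᴴ = τ c² Sᴴ A⁻¹`, and multiplying
on the right by `S` (using `Sᴴ S = τ I` once more) yields `c² Sᴴ A⁻¹ S = B⁻¹`; the identity
follows by sandwiching between `E` and `Eᴴ`.
-/

open Matrix ComplexOrder

namespace Matrix

section Field

variable {K : Type*} [Field K] {m n : Type*} [Fintype m] [Fintype n] [DecidableEq m]
  [DecidableEq n]

theorem inv_mul_eq_smul_mul_inv_of_mul_eq_smul_mul {A : Matrix m m K} {B : Matrix n n K}
    {X : Matrix n m K} {k : K} (hA : IsUnit A.det) (hB : IsUnit B.det)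
    (h : X * A = k • (B * X)) : B⁻¹ * X = k • (X * A⁻¹) :=
  calc B⁻¹ * X = B⁻¹ * (X * A) * A⁻¹ := by
        rw [Matrix.mul_assoc, Matrix.mul_assoc, mul_nonsing_inv _ hA, Matrix.mul_one]
    _ = k • (X * A⁻¹) := by
        rw [h, Matrix.mul_smul, Matrix.smul_mul, ← Matrix.mul_assoc, nonsing_inv_mul _ hB,
          Matrix.one_mul]

theorem mul_smul_mul_mul_add_smul_one {S : Matrix m n K} {T : Matrix n m K} {τ : K}
    (hTS : T * S = τ • 1) (M : Matrix n n K) {a : K} (b : K) (hτa : τ * a ≠ 0) :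
    T * (a • (S * M * T) + b • 1) = (τ * a) • ((M + (b / (τ * a)) • 1) * T) := by
  have hTSMT : T * (S * M * T) = τ • (M * T) := by
    rw [← Matrix.mul_assoc, ← Matrix.mul_assoc, hTS, Matrix.smul_mul, Matrix.smul_mul,
      Matrix.one_mul]
  rw [Matrix.mul_add, Matrix.mul_smul, hTSMT, Matrix.mul_smul, Matrix.mul_one, Matrix.add_mul,
    Matrix.smul_mul, Matrix.one_mul, smul_add, smul_smul, smul_smul, mul_div_cancel₀ _ hτa,
    mul_comm a τ]

theorem smul_mul_inv_mul_eq_inv {S : Matrix m n K} {T : Matrix n m K} {τ : K}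
    (hTS : T * S = τ • 1) (M : Matrix n n K) {a : K} (b : K) (hτ : τ ≠ 0) (ha : a ≠ 0)
    (hA : IsUnit (a • (S * M * T) + b • 1).det) (hB : IsUnit (M + (b / (τ * a)) • 1).det) :
    a • (T * (a • (S * M * T) + b • 1)⁻¹ * S) = (M + (b / (τ * a)) • 1)⁻¹ := by
  set A := a • (S * M * T) + b • 1
  set B := M + (b / (τ * a)) • 1
  have hBT : B⁻¹ * T = (τ * a) • (T * A⁻¹) :=
    inv_mul_eq_smul_mul_inv_of_mul_eq_smul_mul hA hB
      (mul_smul_mul_mul_add_smul_one hTS M b (mul_ne_zero hτ ha))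
  have hτB : τ • B⁻¹ = τ • (a • (T * A⁻¹ * S)) := by
    calc τ • B⁻¹ = B⁻¹ * T * S := by
          rw [Matrix.mul_assoc, hTS, Matrix.mul_smul, Matrix.mul_one]
      _ = τ • (a • (T * A⁻¹ * S)) := by rw [hBT, Matrix.smul_mul, smul_smul]
  exact (smul_right_injective _ hτ hτB).symm

end Field

theorem isUnit_add_smul_one_of_posSemidef {𝕜 : Type*} [RCLike 𝕜] {n : Type*} [Fintype n]
    [DecidableEq n] {M : Matrix n n 𝕜} (hM : M.PosSemidef) {r : 𝕜} (hr : 0 < r) :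
    IsUnit (M + r • 1) :=
  (PosDef.posSemidef_add hM (PosDef.one.smul hr)).isUnit

end Matrix

/-- Core matrix identity of Lemma 1: for `M ⪰ 0`, `SᴴS = τ I`, `c, σ, τ > 0`,
`c² E Sᴴ (c² S M Sᴴ + σ² I)⁻¹ S Eᴴ = E (M + σ²/(τ c²) I)⁻¹ Eᴴ`, and both
inverted matrices are invertible. -/
theorem pilot_covariance_identity
    {n p m : ℕ} (M : Matrix (Fin n) (Fin n) ℂ) (hM : M.PosSemidef)
    (E : Matrix (Fin p) (Fin n) ℂ) (S : Matrix (Fin m) (Fin n) ℂ)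
    (τ : ℝ) (hτ : 0 < τ) (hS : S.conjTranspose * S = (τ : ℂ) • 1)
    (c : ℝ) (hc : 0 < c) (σ : ℝ) (hσ : 0 < σ) :
    IsUnit (((c : ℂ) ^ 2) • (S * M * S.conjTranspose) + ((σ : ℂ) ^ 2) • 1) ∧
    IsUnit (M + ((σ ^ 2 / (τ * c ^ 2) : ℝ) : ℂ) • 1) ∧
    ((c : ℂ) ^ 2) • (E * S.conjTranspose *
        (((c : ℂ) ^ 2) • (S * M * S.conjTranspose) + ((σ : ℂ) ^ 2) • 1)⁻¹ *
        S * E.conjTranspose)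
      = E * (M + ((σ ^ 2 / (τ * c ^ 2) : ℝ) : ℂ) • 1)⁻¹ * E.conjTranspose := by
  have hSMS : (((c : ℂ) ^ 2) • (S * M * S.conjTranspose)).PosSemidef :=
    (hM.mul_mul_conjTranspose_same S).smul (by positivity)
  have hA := isUnit_add_smul_one_of_posSemidef hSMS (r := (σ : ℂ) ^ 2) (by positivity)
  have hB := isUnit_add_smul_one_of_posSemidef hM
    (r := ((σ ^ 2 / (τ * c ^ 2) : ℝ) : ℂ)) (by positivity)
  refine ⟨hA, hB, ?_⟩
  have hratio :
      ((σ ^ 2 / (τ * c ^ 2) : ℝ) : ℂ) = (σ : ℂ) ^ 2 / ((τ : ℂ) * (c : ℂ) ^ 2) := by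
    push_cast; rfl
  rw [hratio] at hB ⊢
  rw [isUnit_iff_isUnit_det] at hA hB
  rw [← smul_mul_inv_mul_eq_inv hS M _ (by exact_mod_cast hτ.ne') (by positivity) hA hB]
  simp only [Matrix.mul_smul, Matrix.smul_mul, Matrix.mul_assoc]
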